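/- arXiv:2310.13776 — 2 statements merged into one kernel-verified Lean document; each statement's English description precedes it below -/
import Mathlib

section
/- If M ⊆ ℂ[A] is an irreducible G-subrepresentation spanned by a set Φ of characters of A, then the subspace of H-fixed vectors of M is spanned by the single element Σ_{χ∈Φ} χ. -/
noncomputable section

variable {A : Type*} [CommGroup A] [Fintype A]

/-- The semidirect product `G = A ⋊ H`, for `H` a subgroup of `Aut(A)`. -/
abbrev Gsd (H : Subgroup (MulAut A)) : Type _ := A ⋊[H.subtype] H

/-- The `G`-representation on `ℂ[A] = (A → ℂ)`: `a₀ ∈ A` acts by `(a₀·f)(x) = f(x·a₀)` and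
`h ∈ H` acts by `(h·f)(x) = f(h⁻¹ x)`. -/
def rho (H : Subgroup (MulAut A)) (g : Gsd H) : (A → ℂ) →ₗ[ℂ] (A → ℂ) where
  toFun f := fun x => f (((g.right : MulAut A))⁻¹ (x * g.left))
  map_add' _ _ := rfl
  map_smul' _ _ := rfl

/-- `M` is a `G`-subrepresentation of `ℂ[A]`. -/
def IsSubrep (H : Subgroup (MulAut A)) (M : Submodule ℂ (A → ℂ)) : Prop :=
  ∀ (g : Gsd H) (f : A → ℂ), f ∈ M → rho H g f ∈ M

/-- `M` is an irreducible `G`-subrepresentation of `ℂ[A]`. -/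
def IsIrred (H : Subgroup (MulAut A)) (M : Submodule ℂ (A → ℂ)) : Prop :=
  M ≠ ⊥ ∧ ∀ N : Submodule ℂ (A → ℂ), N ≤ M → IsSubrep H N → N = ⊥ ∨ N = M

/-- A character `χ : A →* ℂ` regarded as an element of `ℂ[A] = (A → ℂ)`. -/
def charFun (χ : A →* ℂ) : A → ℂ := fun a => χ a

/-- The subspace of `H`-fixed vectors of `M`. -/
def fixedH (H : Subgroup (MulAut A)) (M : Submodule ℂ (A → ℂ)) :
    Submodule ℂ (A → ℂ) where
  carrier := {f | f ∈ M ∧ ∀ h : H, rho H (SemidirectProduct.inr h) f = f}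
  add_mem' := by
    rintro f g ⟨hf, hf2⟩ ⟨hg, hg2⟩
    exact ⟨M.add_mem hf hg, fun h => by rw [map_add, hf2 h, hg2 h]⟩
  zero_mem' := ⟨M.zero_mem, fun _ => map_zero _⟩
  smul_mem' := by
    rintro c f ⟨hf, hf2⟩
    exact ⟨M.smul_mem c hf, fun h => by rw [map_smul, hf2 h]⟩

/-!
Characters are linearly independent; `H` permutes them (`h • χ = χ ∘ h⁻¹`) and `A` only rescales
them. So `M` being a subrepresentation makes `Φ` stable under `H`, and irreducibility makes `Φ` a
single `H`-orbit, because the span of an orbit inside `Φ` is already a subrepresentation. The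
coefficients of an `H`-fixed vector `∑ c χ • χ` are constant along `H`-orbits, hence on `Φ`.
-/

section CharacterAction

variable {M N : Type*} [MulOneClass M] [MulOneClass N]

instance : MulAction (MulAut M) (M →* N) where
  smul σ χ := χ.comp (σ⁻¹ : MulAut M).toMonoidHom
  one_smul _ := rfl
  mul_smul _ _ _ := rfl

theorem MulAut.smul_monoidHom_apply (σ : MulAut M) (χ : M →* N) (x : M) :
    (σ • χ) x = χ (σ⁻¹ x) :=
  rfl

end CharacterAction

section

omit [Fintype A]

variable {H : Subgroup (MulAut A)}

theorem charFun_mem_span_image_iff {S : Set (A →* ℂ)} {χ : A →* ℂ} :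
    charFun χ ∈ Submodule.span ℂ (charFun '' S) ↔ χ ∈ S :=
  ⟨fun h => by_contra fun hχ => (linearIndependent_monoidHom A ℂ).notMem_span_image hχ h,
    fun h => Submodule.subset_span ⟨χ, h, rfl⟩⟩

theorem rho_charFun (g : Gsd H) (χ : A →* ℂ) :
    rho H g (charFun χ) = (g.right • χ) g.left • charFun (g.right • χ) := by
  funext x
  simp [rho, charFun, Subgroup.smul_def, MulAut.smul_monoidHom_apply, mul_comm]

theorem rho_inr_charFun (h : H) (χ : A →* ℂ) :
    rho H (SemidirectProduct.inr h) (charFun χ) = charFun (h • χ) := by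
  simp [rho_charFun]

theorem isSubrep_span_charFun_iff {S : Set (A →* ℂ)} :
    IsSubrep H (Submodule.span ℂ (charFun '' S)) ↔ ∀ h : H, ∀ χ ∈ S, h • χ ∈ S := by
  constructor
  · intro hS h χ hχ
    rw [← charFun_mem_span_image_iff, ← rho_inr_charFun]
    exact hS _ _ (Submodule.subset_span ⟨χ, hχ, rfl⟩)
  · intro hS g f hf
    refine (Submodule.span_le (p := (Submodule.span ℂ (charFun '' S)).comap (rho H g))).2 ?_ hf
    rintro _ ⟨χ, hχ, rfl⟩
    rw [SetLike.mem_coe, Submodule.mem_comap, rho_charFun]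
    exact Submodule.smul_mem _ _ (charFun_mem_span_image_iff.2 (hS _ _ hχ))

theorem eq_orbit_of_isIrred {S : Set (A →* ℂ)} (hS : ∀ h : H, ∀ χ ∈ S, h • χ ∈ S)
    (hirr : IsIrred H (Submodule.span ℂ (charFun '' S))) {χ₀ : A →* ℂ} (hχ₀ : χ₀ ∈ S) :
    S = MulAction.orbit H χ₀ := by
  have horbit : MulAction.orbit H χ₀ ⊆ S := by
    rintro _ ⟨h, rfl⟩
    exact hS h χ₀ hχ₀
  have hsub : IsSubrep H (Submodule.span ℂ (charFun '' MulAction.orbit H χ₀)) :=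
    isSubrep_span_charFun_iff.2 fun h _ hχ => MulAction.mem_orbit_of_mem_orbit h hχ
  have hne : Submodule.span ℂ (charFun '' MulAction.orbit H χ₀) ≠ ⊥ :=
    (Submodule.ne_bot_iff _).2 ⟨charFun χ₀,
      charFun_mem_span_image_iff.2 (MulAction.mem_orbit_self χ₀),
      (linearIndependent_monoidHom A ℂ).ne_zero χ₀⟩
  obtain h | h := hirr.2 _ (Submodule.span_mono (Set.image_mono horbit)) hsub
  · exact absurd h hne
  · refine Set.Subset.antisymm (fun χ hχ => ?_) horbit
    rwa [← charFun_mem_span_image_iff (S := MulAction.orbit H χ₀), h, charFun_mem_span_image_iff]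

theorem rho_inr_sum_smul_charFun {Φ : Finset (A →* ℂ)} (hΦ : ∀ h : H, ∀ χ ∈ Φ, h • χ ∈ Φ)
    (c : (A →* ℂ) → ℂ) (h : H) :
    rho H (SemidirectProduct.inr h) (∑ χ ∈ Φ, c χ • charFun χ) =
      ∑ χ ∈ Φ, c (h⁻¹ • χ) • charFun χ := by
  simp only [map_sum, map_smul, rho_inr_charFun]
  exact Finset.sum_nbij' (h • ·) (h⁻¹ • ·) (fun χ hχ => hΦ _ _ hχ) (fun χ hχ => hΦ _ _ hχ)
    (fun χ _ => inv_smul_smul h χ) (fun χ _ => smul_inv_smul h χ)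
    (fun χ _ => by rw [inv_smul_smul])

theorem rho_inr_sum_smul_charFun_eq_self_iff {Φ : Finset (A →* ℂ)}
    (hΦ : ∀ h : H, ∀ χ ∈ Φ, h • χ ∈ Φ) (c : (A →* ℂ) → ℂ) (h : H) :
    rho H (SemidirectProduct.inr h) (∑ χ ∈ Φ, c χ • charFun χ) = ∑ χ ∈ Φ, c χ • charFun χ ↔
      ∀ χ ∈ Φ, c (h⁻¹ • χ) = c χ := by
  rw [rho_inr_sum_smul_charFun hΦ, ← sub_eq_zero, ← Finset.sum_sub_distrib]
  simp_rw [← sub_smul]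
  refine ⟨fun h0 χ hχ => sub_eq_zero.1 ?_, fun hc => Finset.sum_eq_zero fun χ hχ => ?_⟩
  · exact linearIndependent_iff'.1 (linearIndependent_monoidHom A ℂ) Φ _ h0 χ hχ
  · rw [hc χ hχ, sub_self, zero_smul]

theorem span_sum_charFun_le_fixedH {Φ : Finset (A →* ℂ)}
    (hΦ : ∀ h : H, ∀ χ ∈ Φ, h • χ ∈ Φ) :
    Submodule.span ℂ {∑ χ ∈ Φ, charFun χ} ≤ fixedH H (Submodule.span ℂ (charFun '' ↑Φ)) := by
  rw [Submodule.span_le, Set.singleton_subset_iff]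
  refine ⟨Submodule.sum_mem _ fun χ hχ => Submodule.subset_span ⟨χ, hχ, rfl⟩, fun h => ?_⟩
  simpa using (rho_inr_sum_smul_charFun_eq_self_iff hΦ (fun _ => 1) h).2 fun _ _ => rfl

theorem fixedH_le_span_sum_charFun {Φ : Finset (A →* ℂ)} {χ₀ : A →* ℂ}
    (horbit : (Φ : Set (A →* ℂ)) = MulAction.orbit H χ₀) :
    fixedH H (Submodule.span ℂ (charFun '' ↑Φ)) ≤ Submodule.span ℂ {∑ χ ∈ Φ, charFun χ} := by
  have hΦ : ∀ h : H, ∀ χ ∈ Φ, h • χ ∈ Φ := by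
    simp only [← Finset.mem_coe, horbit]
    exact fun h _ => MulAction.mem_orbit_of_mem_orbit h
  rintro f ⟨hf, hfix⟩
  obtain ⟨c, rfl⟩ := (Submodule.mem_span_image_finset_iff_exists_fun' ℂ).1 hf
  have hc : ∀ χ ∈ Φ, c χ = c χ₀ := by
    intro χ hχ
    obtain ⟨h, rfl⟩ : χ ∈ MulAction.orbit H χ₀ := horbit ▸ Finset.mem_coe.2 hχ
    simpa using ((rho_inr_sum_smul_charFun_eq_self_iff hΦ c h).1 (hfix h) _ hχ).symm
  refine Submodule.mem_span_singleton.2 ⟨c χ₀, ?_⟩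
  rw [Finset.smul_sum]
  exact Finset.sum_congr rfl fun χ hχ => by rw [hc χ hχ]

end

/-- If `M ⊆ ℂ[A]` is an irreducible `G`-subrepresentation spanned by a set `Φ` of
characters of `A`, then the subspace of `H`-fixed vectors of `M` is spanned by the single
element `Σ_{χ∈Φ} χ`. -/
theorem statement_1 (H : Subgroup (MulAut A)) (Φ : Finset (A →* ℂ))
    (M : Submodule ℂ (A → ℂ)) (hMdef : M = Submodule.span ℂ (charFun '' ↑Φ))
    (hM : IsSubrep H M) (hMirr : IsIrred H M) :
    fixedH H M = Submodule.span ℂ {∑ χ ∈ Φ, charFun χ} := by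
  subst hMdef
  have hΦ := isSubrep_span_charFun_iff.1 hM
  obtain ⟨χ₀, hχ₀⟩ : Φ.Nonempty := by
    rw [Finset.nonempty_iff_ne_empty]
    rintro rfl
    exact hMirr.1 (by simp)
  exact le_antisymm (fixedH_le_span_sum_charFun (eq_orbit_of_isIrred hΦ hMirr hχ₀))
    (span_sum_charFun_le_fixedH hΦ)
end
end

section
/- Let M = span(Φ) ⊆ ℂ[A] be an irreducible G-subrepresentation spanned by a set Φ of characters of A, fix χ ∈ Φ, and let H₀ := {h ∈ H : χ∘h = χ} be the stabilizer of χ in H. Let V := ℂ·χ ⊆ ℂ[A], which is a one-dimensional representation of the subgroup A ⋊ H₀ ≤ G under the restricted action. Then M is isomorphic as a G-representation to the induced representation Ind_{A⋊H₀}^{G}(V). -/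
/-!
The intertwiner sends `f ∈ M` to `g ↦ ⟨χ, g·f⟩`, the `χ`-coefficient of `g·f` in the basis of
characters. This coefficient is multiplied by `χ(a)` under translation by `a ∈ A` and is invariant
under the stabilizer `H₀`, so the image lies in the induced representation. The kernel is a
subrepresentation of `M` not containing `χ`, hence zero by irreducibility; and an induced function
`F` is the image of the average of `F(k) · k⁻¹χ` over `k ∈ H`, because `⟨χ, hk⁻¹χ⟩` is the
indicator of `hk⁻¹ ∈ H₀` and `F` is constant on the cosets `H₀h`.
-/

noncomputable section

variable {A : Type*} [CommGroup A] [Fintype A]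

/-- Membership in the concrete model of the induced representation
`Ind_{A⋊H₀}^{G}(ℂ·χ) = {F : G → ℂ | F(jg) = ψ(j)·F(g) for j ∈ A⋊H₀}`, where
`H₀ = {h ∈ H : χ∘h = χ}` is the stabilizer of `χ` and `ψ(a·h) = χ(a)` is the character by
which `A ⋊ H₀` acts on the one-dimensional space `V = ℂ·χ`.  `G` acts on this space of
functions by right translation, `(g·F)(x) = F(xg)`. -/
def IndMem (H : Subgroup (MulAut A)) (χ : A →* ℂ) (F : Gsd H → ℂ) : Prop :=
  ∀ (a : A) (h : H), (∀ x : A, χ ((h : MulAut A) x) = χ x) →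
    ∀ g : Gsd H,
      F (SemidirectProduct.inl a * SemidirectProduct.inr h * g) = χ a * F g

end

open SemidirectProduct

noncomputable section

lemma sum_ite_mul_inv_mem {G : Type*} [Group G] [Fintype G] (S : Subgroup G)
    [DecidablePred (· ∈ S)] (h : G) :
    ∑ k : G, (if h * k⁻¹ ∈ S then 1 else 0 : ℂ) = Nat.card S := by
  calc ∑ k : G, (if h * k⁻¹ ∈ S then 1 else 0 : ℂ)
      = ∑ k : G, (if k ∈ S then 1 else 0 : ℂ) := by
        simpa only [Equiv.divLeft_apply, div_eq_mul_inv] using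
          Equiv.sum_comp (Equiv.divLeft h) (fun k => if k ∈ S then (1 : ℂ) else 0)
    _ = Nat.card S := by rw [Finset.sum_boole, Nat.card_eq_fintype_card, Fintype.card_subtype]

variable {A : Type*} [CommGroup A]

section Representation

variable (H : Subgroup (MulAut A))

lemma rho_mul (x g : Gsd H) (f : A → ℂ) : rho H (x * g) f = rho H x (rho H g f) := by
  funext y
  simp only [rho, LinearMap.coe_mk, AddHom.coe_mk, mul_left, mul_right, Subgroup.coe_mul,
    mul_inv_rev, MulAut.mul_apply, Subgroup.coe_subtype, map_mul, MulAut.inv_apply_self, mul_assoc]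

lemma rho_one (f : A → ℂ) : rho H 1 f = f := by
  funext y
  simp [rho]

lemma rho_inr_charFun_s3 (h : H) (μ : A →* ℂ) :
    rho H (inr h) (charFun μ) = charFun (μ.comp ((h : MulAut A)⁻¹).toMonoidHom) := by
  funext x
  simp [rho, charFun]

def charStab (χ : A →* ℂ) : Subgroup H where
  carrier := {h | ∀ x, χ ((h : MulAut A) x) = χ x}
  one_mem' _ := rfl
  mul_mem' {a b} ha hb x := (ha ((b : MulAut A) x)).trans (hb x)
  inv_mem' {h} hh x := by simpa using (hh (((h : MulAut A))⁻¹ x)).symm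

variable {H} in
lemma mem_charStab {χ : A →* ℂ} {h : H} :
    h ∈ charStab H χ ↔ ∀ x, χ ((h : MulAut A) x) = χ x :=
  Iff.rfl

variable {H} {χ : A →* ℂ}

lemma IndMem.apply_inr_mul {F : Gsd H → ℂ} (hF : IndMem H χ F) {s : H}
    (hs : s ∈ charStab H χ) (g : Gsd H) : F (inr s * g) = F g := by
  simpa using hF 1 s hs g

lemma IndMem.ext {F F' : Gsd H → ℂ} (hF : IndMem H χ F) (hF' : IndMem H χ F')
    (h : ∀ k : H, F (inr k) = F' (inr k)) : F = F' := by
  funext g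
  have hF1 := hF g.left 1 (charStab H χ).one_mem (inr g.right)
  have hF'1 := hF' g.left 1 (charStab H χ).one_mem (inr g.right)
  simp only [map_one, mul_one, inl_left_mul_inr_right] at hF1 hF'1
  rw [hF1, hF'1, h]

end Representation

section Characters

variable [Fintype A]

lemma sum_char_inv_mul_char (χ μ : A →* ℂ) [Decidable (μ = χ)] :
    ∑ x : A, χ x⁻¹ * μ x = if μ = χ then (Fintype.card A : ℂ) else 0 := by
  have hχ : ∀ x, χ x ≠ 0 := fun x => ((Group.isUnit x).map χ).ne_zero
  have hψ : μ * χ.comp invMonoidHom = 1 ↔ μ = χ := by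
    simp only [MonoidHom.ext_iff, MonoidHom.mul_apply, MonoidHom.comp_apply, invMonoidHom_apply,
      map_inv, MonoidHom.one_apply, mul_inv_eq_one₀ (hχ _)]
  have := sum_hom_units (μ * χ.comp invMonoidHom)
  simp only [MonoidHom.mul_apply, MonoidHom.comp_apply, invMonoidHom_apply, hψ] at this
  simp_rw [mul_comm (χ _), this]
  split_ifs <;> simp

/-- The coefficient of `χ` in the expansion of `f` in the basis of characters. -/
def charCoeff (χ : A →* ℂ) : (A → ℂ) →ₗ[ℂ] ℂ :=
  (Fintype.card A : ℂ)⁻¹ • ∑ x : A, χ x⁻¹ • LinearMap.proj x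

lemma charCoeff_apply (χ : A →* ℂ) (f : A → ℂ) :
    charCoeff χ f = (Fintype.card A : ℂ)⁻¹ * ∑ x : A, χ x⁻¹ * f x := by
  simp [charCoeff]

lemma charCoeff_charFun (χ μ : A →* ℂ) [Decidable (μ = χ)] :
    charCoeff χ (charFun μ) = if μ = χ then 1 else 0 := by
  have hA : (Fintype.card A : ℂ) ≠ 0 := by exact_mod_cast Fintype.card_ne_zero
  simp only [charCoeff_apply, charFun, sum_char_inv_mul_char]
  split_ifs <;> simp [hA]

end Characters

section Induced

variable [Fintype A] (H : Subgroup (MulAut A)) (χ : A →* ℂ)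

lemma charCoeff_rho_inl (a : A) (f : A → ℂ) :
    charCoeff χ (rho H (inl a) f) = χ a * charCoeff χ f := by
  simp only [charCoeff_apply, rho, LinearMap.coe_mk, AddHom.coe_mk, left_inl, right_inl,
    OneMemClass.coe_one, inv_one, MulAut.one_apply]
  rw [← Equiv.sum_comp (Equiv.mulRight a) (fun x => χ x⁻¹ * f x), Finset.mul_sum, Finset.mul_sum,
    Finset.mul_sum]
  refine Finset.sum_congr rfl fun x _ => ?_
  simp only [Equiv.coe_mulRight, mul_inv_rev, map_mul, map_inv]
  field_simp [((Group.isUnit a).map χ).ne_zero]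

variable {H χ} in
lemma charCoeff_rho_inr_of_mem {h : H} (hh : h ∈ charStab H χ) (f : A → ℂ) :
    charCoeff χ (rho H (inr h) f) = charCoeff χ f := by
  simp only [charCoeff_apply, rho, LinearMap.coe_mk, AddHom.coe_mk, left_inr, right_inr, mul_one]
  rw [← Equiv.sum_comp ((h : MulAut A) : A ≃ A)]
  congr 2 with x
  simp [← map_inv, mem_charStab.1 hh]

lemma charCoeff_rho_inr_charFun (h : H) [Decidable (h ∈ charStab H χ)] :
    charCoeff χ (rho H (inr h) (charFun χ)) = if h ∈ charStab H χ then 1 else 0 := by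
  classical
  rw [rho_inr_charFun_s3, charCoeff_charFun]
  have : χ.comp ((h : MulAut A)⁻¹).toMonoidHom = χ ↔ h⁻¹ ∈ charStab H χ :=
    MonoidHom.ext_iff.trans Iff.rfl
  simp only [this, inv_mem_iff]

def indMap : (A → ℂ) →ₗ[ℂ] (Gsd H → ℂ) :=
  LinearMap.pi fun g => charCoeff χ ∘ₗ rho H g

lemma indMap_apply (f : A → ℂ) (g : Gsd H) : indMap H χ f g = charCoeff χ (rho H g f) :=
  rfl

lemma indMap_rho (g : Gsd H) (f : A → ℂ) :
    indMap H χ (rho H g f) = fun x => indMap H χ f (x * g) := by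
  funext x
  simp only [indMap_apply, rho_mul]

lemma indMem_indMap (f : A → ℂ) : IndMem H χ (indMap H χ f) := by
  intro a h hh g
  rw [indMap_apply, indMap_apply, rho_mul, rho_mul, charCoeff_rho_inl,
    charCoeff_rho_inr_of_mem (mem_charStab.2 hh)]

variable {H χ}

lemma ker_indMap_comp_subtype {M : Submodule ℂ (A → ℂ)} (hM : IsSubrep H M)
    (hMirr : IsIrred H M) (hχM : charFun χ ∈ M) : LinearMap.ker (indMap H χ ∘ₗ M.subtype) = ⊥ := by
  set N := M ⊓ LinearMap.ker (indMap H χ)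
  have hN : IsSubrep H N := fun g f ⟨hfM, hf⟩ => by
    refine ⟨hM g f hfM, ?_⟩
    change indMap H χ (rho H g f) = 0
    rw [indMap_rho, show indMap H χ f = 0 from hf]
    rfl
  have hNM : N ≠ M := fun hNM => by
    have : indMap H χ (charFun χ) 1 = 0 := by
      rw [(hNM ▸ hχM : charFun χ ∈ N).2]; rfl
    simp [indMap_apply, rho_one, charCoeff_charFun] at this
  have hNbot : N = ⊥ := (hMirr.2 N inf_le_left hN).resolve_right hNM
  rw [LinearMap.ker_eq_bot']
  intro m hm
  have : (m : A → ℂ) ∈ N := ⟨m.2, hm⟩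
  simpa [hNbot] using this

end Induced

section Preimage

variable (H : Subgroup (MulAut A)) (χ : A →* ℂ) [Fintype H]

/-- Averaging `F(k) • k⁻¹·χ` over `k ∈ H` inverts `indMap` on the induced representation; each
coset of the stabilizer is counted `|H₀|` times. -/
def indPreimage (F : Gsd H → ℂ) : A → ℂ :=
  (Nat.card (charStab H χ) : ℂ)⁻¹ • ∑ k : H, F (inr k) • rho H (inr k⁻¹) (charFun χ)

variable {H χ}

lemma indPreimage_mem {M : Submodule ℂ (A → ℂ)} (hM : IsSubrep H M) (hχM : charFun χ ∈ M)
    (F : Gsd H → ℂ) : indPreimage H χ F ∈ M :=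
  M.smul_mem _ (M.sum_mem fun _ _ => M.smul_mem _ (hM _ _ hχM))

variable [Fintype A]

lemma indMap_indPreimage {F : Gsd H → ℂ} (hF : IndMem H χ F) :
    indMap H χ (indPreimage H χ F) = F := by
  classical
  refine IndMem.ext (indMem_indMap H χ _) hF fun h => ?_
  have hterm : ∀ k : H, F (inr k) * charCoeff χ (rho H (inr h) (rho H (inr k⁻¹) (charFun χ))) =
      F (inr h) * if h * k⁻¹ ∈ charStab H χ then 1 else 0 := by
    intro k
    rw [← rho_mul, ← map_mul, charCoeff_rho_inr_charFun]
    split_ifs with hk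
    · rw [← hF.apply_inr_mul (inv_mem hk) (inr h)]
      simp
    · simp
  have hS : (Nat.card (charStab H χ) : ℂ) ≠ 0 := Nat.cast_ne_zero.2 Nat.card_pos.ne'
  simp only [indMap_apply, indPreimage, map_smul, map_sum, smul_eq_mul, hterm, ← Finset.mul_sum,
    sum_ite_mul_inv_mem]
  field_simp

end Preimage

variable [Fintype A]

/-- Let `M = span(Φ) ⊆ ℂ[A]` be an irreducible `G`-subrepresentation spanned by a
set `Φ` of characters, fix `χ ∈ Φ`, and let `H₀` be the stabilizer of `χ` in `H`.  Then `M` is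
isomorphic as a `G`-representation to the induced representation `Ind_{A⋊H₀}^{G}(ℂ·χ)`:
there is an injective `ℂ`-linear map from `M` onto the realization
`{F : G → ℂ | F(jg) = ψ(j)F(g) for j ∈ A⋊H₀}` of the induced representation, intertwining the
`G`-action on `M` with right translation. -/
theorem statement_3 (H : Subgroup (MulAut A)) (Φ : Finset (A →* ℂ)) (χ : A →* ℂ)
    (hχ : χ ∈ Φ) (M : Submodule ℂ (A → ℂ))
    (hMdef : M = Submodule.span ℂ (charFun '' ↑Φ))
    (hM : IsSubrep H M) (hMirr : IsIrred H M) :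
    ∃ T : ↥M →ₗ[ℂ] (Gsd H → ℂ),
      Function.Injective T ∧
      (∀ m : ↥M, IndMem H χ (T m)) ∧
      (∀ F : Gsd H → ℂ, IndMem H χ F → ∃ m : ↥M, T m = F) ∧
      (∀ (g : Gsd H) (m m' : ↥M),
        (m' : A → ℂ) = rho H g (m : A → ℂ) → T m' = fun x => T m (x * g)) := by
  have hχM : charFun χ ∈ M := hMdef ▸ Submodule.subset_span ⟨χ, hχ, rfl⟩
  have : Fintype H := Fintype.ofFinite H
  refine ⟨indMap H χ ∘ₗ M.subtype, ?_, fun m => indMem_indMap H χ m, fun F hF => ?_, ?_⟩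
  · exact LinearMap.ker_eq_bot.1 (ker_indMap_comp_subtype hM hMirr hχM)
  · exact ⟨⟨indPreimage H χ F, indPreimage_mem hM hχM F⟩, indMap_indPreimage hF⟩
  · intro g m m' hm'
    simp only [LinearMap.comp_apply, Submodule.coe_subtype, hm', indMap_rho]
end
end
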